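/- Let t ∈ ℂ with t^3 ≠ 1 and let g_t = t(α_0^3 + α_1^3 + α_2^3) − (t^3 + 2) α_0 α_1 α_2 ∈ ℂ[α_0, α_1, α_2]. Then the partial derivatives ∂g_t/∂α_0, ∂g_t/∂α_1, ∂g_t/∂α_2 have a common zero in ℂ^3 ∖ {0} (i.e., the plane cubic curve defined by g_t is singular) if and only if t(t^3 + 8) = 0. Equivalently, the Cayleyan curve of the Hesse cubic f_t is singular if and only if the j-invariant of the curve {f_t = 0} is zero. -/

import Mathlib

/-!
For `t³ ≠ 1`, the Cayleyan curve of the Hesse cubic, defined by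
`g_t = t(α₀³ + α₁³ + α₂³) − (t³ + 2) α₀α₁α₂`, is singular (its partial
derivatives have a common zero in `ℂ³ ∖ {0}`) if and only if `t(t³ + 8) = 0`,
i.e. if and only if the `j`-invariant of the Hesse cubic `{f_t = 0}` is zero.
-/

noncomputable section

open MvPolynomial

/-- The polynomial ring `ℂ[α₀, α₁, α₂]`. -/
abbrev PolyRing3 := MvPolynomial (Fin 3) ℂ

/-- The Cayleyan cubic `g_t = t(α₀³ + α₁³ + α₂³) − (t³ + 2) α₀α₁α₂`. -/
def cayleyanCubic (t : ℂ) : PolyRing3 :=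
  C t * (X 0 ^ 3 + X 1 ^ 3 + X 2 ^ 3) - C (t ^ 3 + 2) * (X 0 * X 1 * X 2)

/-!
Up to the factor 3, the partial derivatives of `a(α₀³ + α₁³ + α₂³) − b α₀α₁α₂` give the cyclic
system `c zᵢ² = b zᵢ₊₁ zᵢ₊₂` with `c = 3a`. For `c ≠ 0` a vanishing coordinate propagates around
the cycle, so a nonzero solution has no zero coordinate, and multiplying the three equations gives
`c³ = b³`; conversely `(1, 1, ω²)` with `ω = b / c` is a solution. For the Cayleyan cubic,
`(t³ + 2)³ − (3t)³ = (t³ − 1)²(t³ + 8)`.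
-/

section CyclicSystem

variable {K : Type*} [CommRing K] [IsDomain K] {b c : K} {z : Fin 3 → K}

theorem apply_add_one_eq_zero_of_cyclic (hc : c ≠ 0)
    (hz : ∀ i, c * z i ^ 2 = b * (z (i + 1) * z (i + 2))) {i : Fin 3} (hi : z i = 0) :
    z (i + 1) = 0 := by
  have h := hz (i + 1)
  rw [show i + 1 + 2 = i by fin_cases i <;> rfl, hi, mul_zero, mul_zero] at h
  simpa [hc] using h

theorem eq_zero_of_cyclic (hc : c ≠ 0)
    (hz : ∀ i, c * z i ^ 2 = b * (z (i + 1) * z (i + 2))) {i : Fin 3} (hi : z i = 0) :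
    z = 0 := by
  have hi₁ := apply_add_one_eq_zero_of_cyclic hc hz hi
  have hi₂ := apply_add_one_eq_zero_of_cyclic hc hz hi₁
  have hcover : ∀ i j : Fin 3, j = i ∨ j = i + 1 ∨ j = i + 1 + 1 := by decide
  funext j
  rcases hcover i j with rfl | rfl | rfl <;> assumption

theorem cube_eq_cube_of_cyclic (hc : c ≠ 0)
    (hz : ∀ i, c * z i ^ 2 = b * (z (i + 1) * z (i + 2))) (hz₀ : z ≠ 0) :
    c ^ 3 = b ^ 3 := by
  have hne : ∀ i, z i ≠ 0 := fun i h ↦ hz₀ (eq_zero_of_cyclic hc hz h)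
  have hprod : z 0 * z 1 * z 2 ≠ 0 := mul_ne_zero (mul_ne_zero (hne 0) (hne 1)) (hne 2)
  have e₀ := hz 0
  have e₁ := hz 1
  have e₂ := hz 2
  simp only [Fin.isValue, Fin.reduceAdd] at e₀ e₁ e₂
  have key : (c ^ 3 - b ^ 3) * (z 0 * z 1 * z 2) ^ 2 = 0 := by
    linear_combination (c * z 1 ^ 2) * (c * z 2 ^ 2) * e₀ +
      (b * (z 1 * z 2)) * (c * z 2 ^ 2) * e₁ + (b * (z 1 * z 2)) * (b * (z 2 * z 0)) * e₂
  exact sub_eq_zero.1 ((mul_eq_zero.1 key).resolve_right (pow_ne_zero _ hprod))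

end CyclicSystem

theorem exists_ne_zero_cyclic_iff {K : Type*} [Field K] {b c : K} :
    (∃ z : Fin 3 → K, z ≠ 0 ∧ ∀ i, c * z i ^ 2 = b * (z (i + 1) * z (i + 2))) ↔
      c = 0 ∨ b ^ 3 = c ^ 3 := by
  refine ⟨fun ⟨z, hz₀, hz⟩ ↦ or_iff_not_imp_left.2 fun hc ↦ (cube_eq_cube_of_cyclic hc hz hz₀).symm,
    fun h ↦ ?_⟩
  by_cases hc : c = 0
  · subst hc
    refine ⟨![1, 0, 0], fun h ↦ by simpa using congrFun h 0, fun i ↦ ?_⟩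
    fin_cases i <;> simp
  obtain ⟨ω, rfl⟩ : ∃ ω, b = c * ω := ⟨b / c, by field_simp⟩
  have hω : ω ^ 3 = 1 := by
    rw [mul_pow] at h
    exact (mul_eq_left₀ (pow_ne_zero 3 hc)).1 (h.resolve_left hc)
  refine ⟨![1, 1, ω ^ 2], fun h ↦ by simpa using congrFun h 0, fun i ↦ ?_⟩
  fin_cases i <;> simp only [Fin.isValue, Fin.reduceAdd, Fin.reduceFinMk, Matrix.cons_val]
  · linear_combination -c * hω
  · linear_combination -c * hω
  · linear_combination c * ω * hω

section HesseCubic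

variable {R : Type*} [CommRing R]

def hesseCubic (a b : R) : MvPolynomial (Fin 3) R :=
  C a * (X 0 ^ 3 + X 1 ^ 3 + X 2 ^ 3) - C b * (X 0 * X 1 * X 2)

def HasSingularPoint (g : MvPolynomial (Fin 3) R) : Prop :=
  ∃ z : Fin 3 → R, z ≠ 0 ∧ ∀ i, eval z (pderiv i g) = 0

theorem eval_pderiv_hesseCubic (a b : R) (z : Fin 3 → R) (i : Fin 3) :
    eval z (pderiv i (hesseCubic a b)) = 3 * a * z i ^ 2 - b * (z (i + 1) * z (i + 2)) := by
  fin_cases i <;> simp [hesseCubic, pderiv_X] <;> ring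

end HesseCubic

theorem hasSingularPoint_hesseCubic_iff {K : Type*} [Field K] {a b : K} :
    HasSingularPoint (hesseCubic a b) ↔ 3 * a = 0 ∨ b ^ 3 = (3 * a) ^ 3 := by
  simp only [HasSingularPoint, eval_pderiv_hesseCubic, sub_eq_zero]
  exact exists_ne_zero_cyclic_iff

theorem cayleyan_singular_iff_j_zero (t : ℂ) (ht : t ^ 3 ≠ 1) :
    (∃ z : Fin 3 → ℂ, z ≠ 0 ∧ ∀ i, eval z (pderiv i (cayleyanCubic t)) = 0) ↔
      t * (t ^ 3 + 8) = 0 := by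
  change HasSingularPoint (hesseCubic t (t ^ 3 + 2)) ↔ _
  have hfactor : (t ^ 3 + 2) ^ 3 - (3 * t) ^ 3 = (t ^ 3 - 1) ^ 2 * (t ^ 3 + 8) := by ring
  rw [hasSingularPoint_hesseCubic_iff, mul_eq_zero, mul_eq_zero,
    ← sub_eq_zero (a := (t ^ 3 + 2) ^ 3), hfactor, mul_eq_zero, or_iff_right (pow_ne_zero 2 (sub_ne_zero.2 ht))]
  simp only [three_ne_zero, false_or]
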